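/- Explicit expansion of the second eigenvector entry: for g ≥ 2, φ_2(x,y) = (−1)^g·(I_2 + V_1 + x) − ((−1)^g / y)·I_1 I_2 V_1 V_2·det T″, where T″ is the (g−2)×(g−2) tridiagonal matrix with diagonal entries T″_{ii} = I_{i+3} + V_{i+2} + x for i = 1,…,g−2, superdiagonal entries T″_{i,i+1} = 1, and subdiagonal entries T″_{i+1,i} = I_{i+3}V_{i+3} for i = 1,…,g−3 (for g = 2 the empty determinant det T″ is 1 by convention). -/

import Mathlib

/-!
Expand `φ₂` along its second column. That column is the last column of `A`, whose only
nonzero entries in the first `g` rows are the corner `(-1)^g I₁V₁/y` (row 1) and the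
superdiagonal `1` (row `g`). Deleting row `g` leaves a lower triangular minor with diagonal
`(I₂ + V₁ + x, 1, …, 1)`; deleting row 1 leaves a minor whose first column is
`(I₂V₂, 0, …, 0)` and whose complementary block is `T''`.
-/

/-- The Lax matrix `L(I;V)` of the periodic discrete Toda lattice (0-indexed:
row/column `i : Fin (g+1)` corresponds to the 1-indexed `i+1`).  Its entries are
`L_{ii} = I_{i+1} + V_i` (cyclically, so the last diagonal entry is
`I_1 + V_{g+1}`), `L_{i,i+1} = 1`, `L_{i+1,i} = I_{i+1} V_{i+1}`,
`L_{1,g+1} = (-1)^g I_1 V_1 / y`, `L_{g+1,1} = (-1)^g y`,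
all other entries `0`. -/
noncomputable def todaLax (g : ℕ) (I V : Fin (g + 1) → ℂ) (y : ℂ) :
    Matrix (Fin (g + 1)) (Fin (g + 1)) ℂ :=
  Matrix.of fun i j =>
    (if j = i then I (i + 1) + V i else 0)
    + (if (i : ℕ) + 1 = (j : ℕ) then 1 else 0)
    + (if (j : ℕ) + 1 = (i : ℕ) then I i * V i else 0)
    + (if (i : ℕ) = 0 ∧ (j : ℕ) = g then (-1) ^ g * I 0 * V 0 / y else 0)
    + (if (i : ℕ) = g ∧ (j : ℕ) = 0 then (-1) ^ g * y else 0)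

/-- `A = x·𝟙_{g+1} + L`. -/
noncomputable def todaA (g : ℕ) (I V : Fin (g + 1) → ℂ) (x y : ℂ) :
    Matrix (Fin (g + 1)) (Fin (g + 1)) ℂ :=
  x • (1 : Matrix (Fin (g + 1)) (Fin (g + 1)) ℂ) + todaLax g I V y

/-- For `i = 1, …, g` (here `i : Fin g`), `φ_i(x,y)` is the determinant of the
`g × g` matrix obtained from the first `g` rows of `A` by replacing its `i`-th
column with the `(g+1)`-th column of `A`, all other columns unchanged and in
place. -/
noncomputable def todaPhi (g : ℕ) (I V : Fin (g + 1) → ℂ) (x y : ℂ) (i : Fin g) : ℂ :=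
  (Matrix.of fun r c : Fin g =>
    if c = i then todaA g I V x y r.castSucc (Fin.last g)
    else todaA g I V x y r.castSucc c.castSucc).det

/-- `φ_{g+1}(x) = det(x·𝟙_g + L_Λ̄)`, where `L_Λ̄` is the top-left `g × g`
block of `L`. -/
noncomputable def todaPhiLast (g : ℕ) (I V : Fin (g + 1) → ℂ) (x y : ℂ) : ℂ :=
  (x • (1 : Matrix (Fin g) (Fin g) ℂ) +
    (todaLax g I V y).submatrix Fin.castSucc Fin.castSucc).det

/-- The `(g-2) × (g-2)` tridiagonal matrix `T''` with diagonal entries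
`T''_{ii} = I_{i+3} + V_{i+2} + x` (1-indexed `i = 1, …, g-2`), superdiagonal
entries `1`, and subdiagonal entries `T''_{i+1,i} = I_{i+3} V_{i+3}`
(1-indexed `i = 1, …, g-3`). -/
noncomputable def todaT'' (g : ℕ) (I V : Fin (g + 1) → ℂ) (x : ℂ) :
    Matrix (Fin (g - 2)) (Fin (g - 2)) ℂ :=
  Matrix.of fun r c =>
    if r = c then
      I ⟨(r : ℕ) + 3, by have := r.isLt; omega⟩ +
        V ⟨(r : ℕ) + 2, by have := r.isLt; omega⟩ + x
    else if (r : ℕ) + 1 = (c : ℕ) then 1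
    else if (c : ℕ) + 1 = (r : ℕ) then
      I ⟨(r : ℕ) + 2, by have := r.isLt; omega⟩ *
        V ⟨(r : ℕ) + 2, by have := r.isLt; omega⟩
    else 0

open Matrix

def unitTridiag {R : Type*} [Zero R] [One R] {m : ℕ} (d s : Fin m → R) :
    Matrix (Fin m) (Fin m) R :=
  of fun r c =>
    if r = c then d r else if (r : ℕ) + 1 = c then 1 else if (c : ℕ) + 1 = r then s r else 0

section unitTridiag

variable {R : Type*} [CommRing R]

lemma unitTridiag_submatrix_succ {m : ℕ} (d s : Fin (m + 1) → R) :
    (unitTridiag d s).submatrix Fin.succ Fin.succ =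
      unitTridiag (fun k => d k.succ) (fun k => s k.succ) := by
  ext r c
  simp [unitTridiag, Fin.succ_inj]

lemma det_unitTridiag_submatrix_last_one {n : ℕ} (d s : Fin (n + 2) → R) :
    ((unitTridiag d s).submatrix (Fin.last (n + 1)).succAbove
      (1 : Fin (n + 2)).succAbove).det = d 0 := by
  rw [det_of_isLowerTriangular, Fin.prod_univ_succ]
  · simp [unitTridiag, Fin.ext_iff]
  · intro i j hij
    have hij : (i : ℕ) < j := hij
    have hj : j ≠ 0 := by rintro rfl; simp at hij
    obtain ⟨j, rfl⟩ := Fin.exists_succ_eq.mpr hj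
    simp only [Fin.val_succ] at hij
    simp only [unitTridiag, submatrix_apply, of_apply, Fin.succAbove_last, Fin.one_succAbove_succ,
      Fin.ext_iff, Fin.val_castSucc, Fin.val_succ]
    rw [if_neg (by omega), if_neg (by omega), if_neg (by omega)]

lemma det_unitTridiag_submatrix_zero_one {n : ℕ} (d s : Fin (n + 2) → R) :
    ((unitTridiag d s).submatrix (0 : Fin (n + 2)).succAbove (1 : Fin (n + 2)).succAbove).det =
      s 1 * ((unitTridiag d s).submatrix (Fin.succ ∘ Fin.succ) (Fin.succ ∘ Fin.succ)).det := by
  have hcols : (Fin.succAbove 1 ∘ Fin.succ : Fin n → Fin (n + 2)) = Fin.succ ∘ Fin.succ :=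
    funext Fin.one_succAbove_succ
  rw [det_succ_column_zero, Fin.sum_univ_succ, Finset.sum_eq_zero, add_zero]
  · simp only [submatrix_submatrix, Fin.succAbove_zero, hcols]
    simp [unitTridiag]
  · intro i _
    simp [unitTridiag, Fin.ext_iff]

end unitTridiag

lemma det_updateCol_eq_sum {R : Type*} [CommRing R] {n : ℕ}
    (M : Matrix (Fin (n + 1)) (Fin (n + 1)) R) (j : Fin (n + 1)) (v : Fin (n + 1) → R) :
    (M.updateCol j v).det =
      ∑ i : Fin (n + 1), (-1) ^ ((i : ℕ) + j) * v i * (M.submatrix i.succAbove j.succAbove).det := by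
  simp [det_succ_column _ j, submatrix_updateCol_succAbove]

lemma todaPhi_eq_det_updateCol (g : ℕ) (I V : Fin (g + 1) → ℂ) (x y : ℂ) (i : Fin g) :
    todaPhi g I V x y i = (((todaA g I V x y).submatrix Fin.castSucc Fin.castSucc).updateCol i
      fun r => todaA g I V x y r.castSucc (Fin.last g)).det := by
  unfold todaPhi
  congr 1
  ext r c
  simp [updateCol_apply]

lemma todaA_submatrix_castSucc (g : ℕ) (I V : Fin (g + 1) → ℂ) (x y : ℂ) :
    (todaA g I V x y).submatrix Fin.castSucc Fin.castSucc =
      unitTridiag (fun k => x + I (k.castSucc + 1) + V k.castSucc)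
        (fun k => I k.castSucc * V k.castSucc) := by
  ext r c
  have hr : (r : ℕ) ≠ g := r.isLt.ne
  have hc : (c : ℕ) ≠ g := c.isLt.ne
  simp only [todaA, todaLax, unitTridiag, submatrix_apply, Matrix.add_apply, Matrix.smul_apply,
    one_apply, of_apply, Fin.ext_iff, Fin.val_castSucc, smul_eq_mul, hr, hc, and_false,
    false_and, if_false, add_zero]
  split_ifs <;> first | omega | ring

lemma todaA_castSucc_last (n : ℕ) (I V : Fin (n + 3) → ℂ) (x y : ℂ) (r : Fin (n + 2)) :
    todaA (n + 2) I V x y r.castSucc (Fin.last (n + 2)) =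
      if r = 0 then (-1) ^ (n + 2) * I 0 * V 0 / y else if r = Fin.last (n + 1) then 1 else 0 := by
  have hr : (r : ℕ) < n + 2 := r.isLt
  simp only [todaA, todaLax, Matrix.add_apply, Matrix.smul_apply, one_apply, of_apply,
    Fin.val_castSucc, Fin.val_last, smul_eq_mul, Fin.ext_iff, Fin.val_zero, hr.ne, hr.ne',
    show n + 2 + 1 ≠ r from by omega, show n + 2 ≠ 0 from by omega, and_true, and_false,
    if_false]
  split_ifs <;> first | omega | ring

lemma todaT''_eq_submatrix (n : ℕ) (I V : Fin (n + 3) → ℂ) (x y : ℂ) :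
    todaT'' (n + 2) I V x = ((todaA (n + 2) I V x y).submatrix Fin.castSucc Fin.castSucc).submatrix
      (Fin.succ ∘ Fin.succ) (Fin.succ ∘ Fin.succ) := by
  rw [todaA_submatrix_castSucc, ← submatrix_submatrix, unitTridiag_submatrix_succ,
    unitTridiag_submatrix_succ]
  ext r c
  have hr : (r : ℕ) < n := r.isLt
  have h2 : r.succ.succ.castSucc = ⟨r + 2, by omega⟩ := rfl
  have h3 : r.succ.succ.castSucc + 1 = ⟨r + 3, by omega⟩ := by
    ext
    simp [Fin.val_add, Nat.mod_eq_of_lt (show (r : ℕ) + 3 < n + 3 by omega)]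
  simp only [todaT'', unitTridiag, of_apply]
  rw [h3, h2]
  split_ifs <;> ring

theorem todaPhi_two_expansion_general (g : ℕ) (hg : 2 ≤ g) (I V : Fin (g + 1) → ℂ)
    (x y : ℂ) :
    todaPhi g I V x y ⟨1, hg⟩ =
      (-1) ^ g * (I 1 + V 0 + x) -
        (-1) ^ g / y * (I 0 * I 1 * V 0 * V 1) * (todaT'' g I V x).det := by
  obtain ⟨n, rfl⟩ : ∃ n, g = n + 2 := ⟨g - 2, by omega⟩
  rw [Fin.mk_one, todaPhi_eq_det_updateCol, det_updateCol_eq_sum,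
    Fintype.sum_eq_add 0 (Fin.last (n + 1)) (Fin.last_pos).ne, todaT''_eq_submatrix n I V x y,
    todaA_submatrix_castSucc, det_unitTridiag_submatrix_zero_one,
    det_unitTridiag_submatrix_last_one, todaA_castSucc_last, todaA_castSucc_last]
  · simp only [Fin.val_zero, Fin.val_one, Fin.val_last, Fin.castSucc_zero, Fin.castSucc_one,
      Fin.last_pos.ne', if_true, if_false, zero_add]
    ring
  · intro i ⟨hi0, hil⟩
    simp [todaA_castSucc_last, hi0, hil]

/-- Explicit expansion of the second eigenvector entry: for `g ≥ 2`,
`φ_2(x,y) = (-1)^g·(I_2 + V_1 + x) - ((-1)^g / y)·I_1 I_2 V_1 V_2·det T''`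
(for `g = 2` the empty determinant `det T''` is `1`). -/
theorem todaPhi_two_expansion (g : ℕ) (hg : 2 ≤ g) (I V : Fin (g + 1) → ℂ)
    (x y : ℂ) (hy : y ≠ 0) :
    todaPhi g I V x y ⟨1, hg⟩ =
      (-1) ^ g * (I 1 + V 0 + x) -
        (-1) ^ g / y * (I 0 * I 1 * V 0 * V 1) * (todaT'' g I V x).det :=
  todaPhi_two_expansion_general g hg I V x y
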